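/- arXiv:2605.25677 — 2 statements merged into one kernel-verified Lean document; each statement's English description precedes it below -/
import Mathlib

section
/- Let g : ℝ → ℝ be Lipschitz continuous with constant L_g on an interval containing the grid points x_1 < x_2 < ... < x_N with uniform spacing Δx. Let G = diag(g(x_1), ..., g(x_N)) and let C₁ ∈ ℝ^{N×N} be the central-difference matrix with (C₁)_{i,i+1} = 1/(2Δx), (C₁)_{i,i-1} = -1/(2Δx), all other entries zero. Then the logarithmic norm μ(C₁G) := λ_max((C₁G + G C₁ᵀ)/2) satisfies μ(C₁G) ≤ L_g/2, and likewise μ(-C₁G) ≤ L_g/2. -/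
open Matrix

/-- Logarithmic norm of a real square matrix:
μ(A) = sup_{x ≠ 0} xᵀAx/(xᵀx) = λ_max((A+Aᵀ)/2). -/
noncomputable def logNorm {n : ℕ} (A : Matrix (Fin n) (Fin n) ℝ) : ℝ :=
  sSup {r : ℝ | ∃ x : Fin n → ℝ, x ≠ 0 ∧ r = x ⬝ᵥ (A *ᵥ x) / (x ⬝ᵥ x)}

/-- Gershgorin-style bound: the logarithmic norm is bounded by the maximal
absolute row sum of the symmetrized matrix. -/
lemma logNorm_le_of_symm_rowsum {n : ℕ} (A : Matrix (Fin n) (Fin n) ℝ) (c : ℝ) (hc : 0 ≤ c)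
    (h : ∀ i, ∑ j, |(A i j + A j i) / 2| ≤ c) : logNorm A ≤ c := by
  apply Real.sSup_le _ hc
  rintro r ⟨x, hx, rfl⟩
  have hnn : (0:ℝ) ≤ x ⬝ᵥ x := Finset.sum_nonneg fun i _ => mul_self_nonneg (x i)
  have hxx : 0 < x ⬝ᵥ x := by
    rcases lt_or_eq_of_le hnn with h' | h'
    · exact h'
    · exact absurd (dotProduct_self_eq_zero.mp h'.symm) hx
  rw [div_le_iff₀ hxx]
  have key : x ⬝ᵥ (A *ᵥ x) = ∑ i, ∑ j, ((A i j + A j i) / 2) * (x i * x j) := by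
    have e0 : x ⬝ᵥ (A *ᵥ x) = ∑ i, ∑ j, A i j * (x i * x j) := by
      simp only [dotProduct, mulVec, Finset.mul_sum]
      exact Finset.sum_congr rfl fun i _ => Finset.sum_congr rfl fun j _ => by ring
    have e1 : ∑ i, ∑ j, A j i * (x i * x j) = ∑ i, ∑ j, A i j * (x i * x j) := by
      rw [Finset.sum_comm]
      exact Finset.sum_congr rfl fun i _ => Finset.sum_congr rfl fun j _ => by ring
    rw [e0]
    rw [show (∑ i, ∑ j, ((A i j + A j i) / 2) * (x i * x j))
        = ((∑ i, ∑ j, A i j * (x i * x j)) + (∑ i, ∑ j, A j i * (x i * x j))) / 2 by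
      rw [← Finset.sum_add_distrib]
      rw [eq_div_iff (by norm_num : (2:ℝ) ≠ 0), Finset.sum_mul]
      refine Finset.sum_congr rfl fun i _ => ?_
      rw [← Finset.sum_add_distrib, Finset.sum_mul]
      exact Finset.sum_congr rfl fun j _ => by ring]
    rw [e1]; ring
  rw [key]
  have step1 : ∑ i, ∑ j, ((A i j + A j i) / 2) * (x i * x j)
      ≤ ∑ i, ∑ j, |(A i j + A j i) / 2| * ((x i ^ 2 + x j ^ 2) / 2) := by
    refine Finset.sum_le_sum fun i _ => Finset.sum_le_sum fun j _ => ?_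
    calc ((A i j + A j i) / 2) * (x i * x j)
        ≤ |((A i j + A j i) / 2) * (x i * x j)| := le_abs_self _
      _ = |(A i j + A j i) / 2| * |x i * x j| := abs_mul _ _
      _ ≤ |(A i j + A j i) / 2| * ((x i ^ 2 + x j ^ 2) / 2) := by
          refine mul_le_mul_of_nonneg_left ?_ (abs_nonneg _)
          rw [abs_le]
          constructor <;> nlinarith [sq_nonneg (x i - x j), sq_nonneg (x i + x j)]
  have step2 : ∑ i, ∑ j, |(A i j + A j i) / 2| * ((x i ^ 2 + x j ^ 2) / 2)
      ≤ c * (x ⬝ᵥ x) := by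
    have split : ∑ i, ∑ j, |(A i j + A j i) / 2| * ((x i ^ 2 + x j ^ 2) / 2)
        = (∑ i, ∑ j, |(A i j + A j i) / 2| * x i ^ 2 / 2)
          + (∑ i, ∑ j, |(A i j + A j i) / 2| * x j ^ 2 / 2) := by
      rw [← Finset.sum_add_distrib]
      refine Finset.sum_congr rfl fun i _ => ?_
      rw [← Finset.sum_add_distrib]
      exact Finset.sum_congr rfl fun j _ => by ring
    have sym : ∑ i, ∑ j, |(A i j + A j i) / 2| * x j ^ 2 / 2
        = ∑ i, ∑ j, |(A i j + A j i) / 2| * x i ^ 2 / 2 := by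
      rw [Finset.sum_comm]
      exact Finset.sum_congr rfl fun i _ => Finset.sum_congr rfl fun j _ => by
        rw [add_comm (A j i)]
    rw [split, sym, ← Finset.sum_add_distrib]
    have : ∀ i : Fin n, (∑ j, |(A i j + A j i) / 2| * x i ^ 2 / 2)
        + (∑ j, |(A i j + A j i) / 2| * x i ^ 2 / 2) ≤ c * (x i * x i) := by
      intro i
      have : (∑ j, |(A i j + A j i) / 2| * x i ^ 2 / 2)
          + (∑ j, |(A i j + A j i) / 2| * x i ^ 2 / 2)
          = (∑ j, |(A i j + A j i) / 2|) * x i ^ 2 := by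
        rw [Finset.sum_mul]
        rw [← Finset.sum_add_distrib]
        exact Finset.sum_congr rfl fun j _ => by ring
      rw [this, show x i * x i = x i ^ 2 by ring]
      exact mul_le_mul_of_nonneg_right (h i) (sq_nonneg _)
    calc (∑ i, ((∑ j, |(A i j + A j i) / 2| * x i ^ 2 / 2)
            + (∑ j, |(A i j + A j i) / 2| * x i ^ 2 / 2)))
        ≤ ∑ i, c * (x i * x i) := Finset.sum_le_sum fun i _ => this i
      _ = c * (x ⬝ᵥ x) := by rw [dotProduct, Finset.mul_sum]
  exact le_trans step1 step2

/-- μ(±C₁G) ≤ L_g/2 for the central difference matrix C₁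
and G = diag(g(x_i)) with g Lipschitz of constant L_g on a uniform grid. -/
theorem stmt_2 (N : ℕ) (g : ℝ → ℝ) (Lg Δx : ℝ) (hΔx : 0 < Δx)
    (hg : ∀ a b : ℝ, |g a - g b| ≤ Lg * |a - b|)
    (x : Fin N → ℝ)
    (hx : ∀ i j : Fin N, x j - x i = ((j : ℝ) - (i : ℝ)) * Δx)
    (C₁ : Matrix (Fin N) (Fin N) ℝ)
    (hC₁ : ∀ i j : Fin N, C₁ i j =
      if (j : ℕ) = (i : ℕ) + 1 then 1 / (2 * Δx)
      else if (i : ℕ) = (j : ℕ) + 1 then -(1 / (2 * Δx)) else 0)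
    (G : Matrix (Fin N) (Fin N) ℝ) (hG : G = Matrix.diagonal fun i => g (x i)) :
    logNorm (C₁ * G) ≤ Lg / 2 ∧ logNorm (-(C₁ * G)) ≤ Lg / 2 := by
  have hLg : 0 ≤ Lg := by
    have h1 := hg 0 1
    have h2 : (0:ℝ) ≤ |g 0 - g 1| := abs_nonneg _
    simp at h1
    linarith
  set A := C₁ * G with hA
  have hAij : ∀ i j, A i j = C₁ i j * g (x j) := by
    intro i j
    rw [hA, hG, Matrix.mul_diagonal]
  -- entrywise bound on the symmetrized matrix
  have hS : ∀ i j : Fin N, |(A i j + A j i) / 2|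
      ≤ if ((j : ℕ) = (i : ℕ) + 1 ∨ (i : ℕ) = (j : ℕ) + 1) then Lg / 4 else 0 := by
    intro i j
    rw [hAij, hAij, hC₁ i j, hC₁ j i]
    by_cases h1 : (j : ℕ) = (i : ℕ) + 1
    · have h2 : ¬ (i : ℕ) = (j : ℕ) + 1 := by omega
      rw [if_pos h1, if_neg h2, if_pos h1, if_pos (Or.inl h1)]
      have hd : x j - x i = Δx := by
        rw [hx i j]
        have : ((j : Fin N) : ℝ) = ((i : Fin N) : ℝ) + 1 := by
          have := congrArg (fun m : ℕ => (m : ℝ)) h1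
          push_cast at this
          exact_mod_cast this
        rw [this]; ring
      have hg' : |g (x j) - g (x i)| ≤ Lg * Δx := by
        calc |g (x j) - g (x i)| ≤ Lg * |x j - x i| := hg _ _
          _ = Lg * Δx := by rw [hd, abs_of_pos hΔx]
      have heq : (1 / (2 * Δx) * g (x j) + -(1 / (2 * Δx)) * g (x i)) / 2
          = (g (x j) - g (x i)) / (4 * Δx) := by
        field_simp; ring
      rw [heq, abs_div, abs_of_pos (by linarith : (0:ℝ) < 4 * Δx),
        div_le_div_iff₀ (by linarith) (by norm_num)]
      nlinarith
    · by_cases h2 : (i : ℕ) = (j : ℕ) + 1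
      · rw [if_neg h1, if_pos h2, if_pos h2, if_pos (Or.inr h2)]
        have hd : x i - x j = Δx := by
          rw [hx j i]
          have : ((i : Fin N) : ℝ) = ((j : Fin N) : ℝ) + 1 := by
            have := congrArg (fun m : ℕ => (m : ℝ)) h2
            push_cast at this
            exact_mod_cast this
          rw [this]; ring
        have hg' : |g (x i) - g (x j)| ≤ Lg * Δx := by
          calc |g (x i) - g (x j)| ≤ Lg * |x i - x j| := hg _ _
            _ = Lg * Δx := by rw [hd, abs_of_pos hΔx]
        have heq : (-(1 / (2 * Δx)) * g (x j) + 1 / (2 * Δx) * g (x i)) / 2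
            = (g (x i) - g (x j)) / (4 * Δx) := by
          field_simp; ring
        rw [heq, abs_div, abs_of_pos (by linarith : (0:ℝ) < 4 * Δx),
          div_le_div_iff₀ (by linarith) (by norm_num)]
        nlinarith
      · simp [h1, h2]
  -- row sum bound
  have hcard : ∀ i : Fin N,
      (Finset.filter (fun j : Fin N =>
        (j : ℕ) = (i : ℕ) + 1 ∨ (i : ℕ) = (j : ℕ) + 1) Finset.univ).card ≤ 2 := by
    intro i
    classical
    rw [Finset.filter_or]
    refine le_trans (Finset.card_union_le _ _) ?_
    have c1 : (Finset.filter (fun j : Fin N => (j : ℕ) = (i : ℕ) + 1) Finset.univ).card ≤ 1 := by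
      apply Finset.card_le_one.mpr
      intro a ha b hb
      simp only [Finset.mem_filter] at ha hb
      exact Fin.ext (by omega)
    have c2 : (Finset.filter (fun j : Fin N => (i : ℕ) = (j : ℕ) + 1) Finset.univ).card ≤ 1 := by
      apply Finset.card_le_one.mpr
      intro a ha b hb
      simp only [Finset.mem_filter] at ha hb
      exact Fin.ext (by omega)
    omega
  have hrow : ∀ i : Fin N, ∑ j, |(A i j + A j i) / 2| ≤ Lg / 2 := by
    intro i
    classical
    have h1 : ∑ j : Fin N, |(A i j + A j i) / 2|
        ≤ ∑ j : Fin N, (if (j : ℕ) = (i : ℕ) + 1 ∨ (i : ℕ) = (j : ℕ) + 1 then Lg / 4 else 0) :=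
      Finset.sum_le_sum fun j _ => hS i j
    have h2 : ∑ j : Fin N, (if (j : ℕ) = (i : ℕ) + 1 ∨ (i : ℕ) = (j : ℕ) + 1 then Lg / 4 else 0)
        ≤ Lg / 2 := by
      rw [← Finset.sum_filter, Finset.sum_const, nsmul_eq_mul]
      have hc2 : ((Finset.filter (fun j : Fin N =>
          (j : ℕ) = (i : ℕ) + 1 ∨ (i : ℕ) = (j : ℕ) + 1) Finset.univ).card : ℝ) ≤ 2 := by
        exact_mod_cast hcard i
      nlinarith
    linarith
  have hrowneg : ∀ i : Fin N, ∑ j, |((-A) i j + (-A) j i) / 2| ≤ Lg / 2 := by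
    intro i
    calc ∑ j, |((-A) i j + (-A) j i) / 2|
        = ∑ j, |(A i j + A j i) / 2| := by
          refine Finset.sum_congr rfl fun j _ => ?_
          rw [show ((-A) i j + (-A) j i) / 2 = -((A i j + A j i) / 2) by
            simp [Matrix.neg_apply]; ring, abs_neg]
      _ ≤ Lg / 2 := hrow i
  exact ⟨logNorm_le_of_symm_rowsum A (Lg / 2) (by linarith) hrow,
    logNorm_le_of_symm_rowsum (-A) (Lg / 2) (by linarith) hrowneg⟩
end

section
/- Let g : ℝ → ℝ be Lipschitz with constant L_g, G = diag(g(x_i)) as above, and C₁ the central difference matrix. Then μ(G C₁) ≤ L_g/2 and μ(-G C₁) ≤ L_g/2, where μ denotes the logarithmic norm μ(A) = λ_max((A+Aᵀ)/2). -/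
open Matrix

/-- μ(±GC₁) ≤ L_g/2 for the central difference matrix C₁
and G = diag(g(x_i)) with g Lipschitz of constant L_g on a uniform grid. -/
theorem stmt_3 (N : ℕ) (g : ℝ → ℝ) (Lg Δx : ℝ) (hΔx : 0 < Δx)
    (hg : ∀ a b : ℝ, |g a - g b| ≤ Lg * |a - b|)
    (x : Fin N → ℝ)
    (hx : ∀ i j : Fin N, x j - x i = ((j : ℝ) - (i : ℝ)) * Δx)
    (C₁ : Matrix (Fin N) (Fin N) ℝ)
    (hC₁ : ∀ i j : Fin N, C₁ i j =
      if (j : ℕ) = (i : ℕ) + 1 then 1 / (2 * Δx)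
      else if (i : ℕ) = (j : ℕ) + 1 then -(1 / (2 * Δx)) else 0)
    (G : Matrix (Fin N) (Fin N) ℝ) (hG : G = Matrix.diagonal fun i => g (x i)) :
    logNorm (G * C₁) ≤ Lg / 2 ∧ logNorm (-(G * C₁)) ≤ Lg / 2 := by
  have hLg : 0 ≤ Lg := by
    have h := hg 0 1
    have h2 := abs_nonneg (g 0 - g 1)
    simp at h
    linarith
  set c : ℝ := 1 / (2 * Δx) with hc
  have hcpos : 0 < c := by positivity
  have hA : ∀ i j, (G * C₁) i j = g (x i) * C₁ i j := by
    intro i j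
    rw [hG, Matrix.diagonal_mul]
  -- key quadratic form bound
  have hkey : ∀ v : Fin N → ℝ, |v ⬝ᵥ ((G * C₁) *ᵥ v)| ≤ Lg / 2 * (v ⬝ᵥ v) := by
    intro v
    set F : Fin N × Fin N → ℝ := fun p => v p.1 * ((G * C₁) p.1 p.2 * v p.2) with hF
    set P : Fin N × Fin N → Prop := fun p => (p.2 : ℕ) = (p.1 : ℕ) + 1 with hP
    set P' : Fin N × Fin N → Prop := fun p => (p.1 : ℕ) = (p.2 : ℕ) + 1 with hP'
    have hsum0 : v ⬝ᵥ ((G * C₁) *ᵥ v) = ∑ p : Fin N × Fin N, F p := by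
      simp only [dotProduct, mulVec, Finset.mul_sum, hF]
      rw [← Finset.univ_product_univ, Finset.sum_product]
    -- split the sum
    have hsplit : ∀ p : Fin N × Fin N,
        F p = (if P p then F p else 0) + (if P' p then F p else 0) := by
      intro p
      by_cases h1 : P p
      · have h2 : ¬ P' p := by simp only [hP, hP'] at h1 ⊢; omega
        rw [if_pos h1, if_neg h2, add_zero]
      · by_cases h2 : P' p
        · rw [if_neg h1, if_pos h2, zero_add]
        · have : F p = 0 := by
            simp only [hF, hA, hC₁]
            simp only [hP] at h1; simp only [hP'] at h2
            rw [if_neg h1, if_neg h2]; ring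
          simp [h1, h2, this]
    have hsum1 : v ⬝ᵥ ((G * C₁) *ᵥ v) =
        ∑ p ∈ Finset.univ.filter P, F p + ∑ p ∈ Finset.univ.filter P', F p := by
      rw [hsum0]
      rw [Finset.sum_congr rfl (fun p _ => hsplit p), Finset.sum_add_distrib,
        Finset.sum_filter, Finset.sum_filter]
    -- transfer the second sum via swap
    have hswap : ∑ p ∈ Finset.univ.filter P', F p
        = ∑ p ∈ Finset.univ.filter P, F p.swap := by
      apply Finset.sum_nbij' (fun p => Prod.swap p) (fun p => Prod.swap p)
      · intro a ha; simp only [Finset.mem_filter, Finset.mem_univ, true_and, hP, hP'] at ha ⊢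
        exact ha
      · intro a ha; simp only [Finset.mem_filter, Finset.mem_univ, true_and, hP, hP'] at ha ⊢
        exact ha
      · intro a _; simp
      · intro a _; simp
      · intro a _; simp
    have hsum2 : v ⬝ᵥ ((G * C₁) *ᵥ v) =
        ∑ p ∈ Finset.univ.filter P, (c * (g (x p.1) - g (x p.2)) * (v p.1 * v p.2)) := by
      rw [hsum1, hswap, ← Finset.sum_add_distrib]
      apply Finset.sum_congr rfl
      intro p hp
      simp only [Finset.mem_filter, hP] at hp
      have hp' : ¬ ((p.1 : ℕ) = (p.2 : ℕ) + 1) := by omega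
      simp only [hF, Prod.fst_swap, Prod.snd_swap, hA, hC₁]
      rw [if_pos hp.2, if_neg hp', if_pos hp.2]
      ring
    -- bound each term
    have hterm : ∀ p ∈ Finset.univ.filter P,
        |c * (g (x p.1) - g (x p.2)) * (v p.1 * v p.2)|
          ≤ Lg / 2 * ((v p.1 * v p.1 + v p.2 * v p.2) / 2) := by
      intro p hp
      simp only [Finset.mem_filter, hP] at hp
      have hxd : x p.2 - x p.1 = Δx := by
        rw [hx p.1 p.2]
        have : ((p.2 : Fin N) : ℝ) = ((p.1 : Fin N) : ℝ) + 1 := by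
          have := hp.2
          push_cast [this]
          ring
        rw [this]; ring
      have hgb : |g (x p.1) - g (x p.2)| ≤ Lg * Δx := by
        have := hg (x p.1) (x p.2)
        have h2 : |x p.1 - x p.2| = Δx := by
          rw [abs_sub_comm, hxd]; exact abs_of_pos hΔx
        rw [h2] at this; exact this
      have h1 : |c * (g (x p.1) - g (x p.2)) * (v p.1 * v p.2)|
          = c * |g (x p.1) - g (x p.2)| * |v p.1 * v p.2| := by
        rw [abs_mul, abs_mul, abs_of_pos hcpos]
      rw [h1]
      have h2 : c * |g (x p.1) - g (x p.2)| ≤ Lg / 2 := by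
        have : c * |g (x p.1) - g (x p.2)| ≤ c * (Lg * Δx) := by
          exact mul_le_mul_of_nonneg_left hgb (le_of_lt hcpos)
        have hce : c * (Lg * Δx) = Lg / 2 := by
          rw [hc, div_mul_eq_mul_div, one_mul, mul_comm Lg Δx, mul_comm 2 Δx, mul_div_mul_left Lg 2 hΔx.ne']
        linarith
      have h3 : |v p.1 * v p.2| ≤ (v p.1 * v p.1 + v p.2 * v p.2) / 2 := by
        rw [abs_mul]
        nlinarith [sq_nonneg (|v p.1| - |v p.2|), abs_nonneg (v p.1), abs_nonneg (v p.2),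
          abs_mul_abs_self (v p.1), abs_mul_abs_self (v p.2)]
      calc c * |g (x p.1) - g (x p.2)| * |v p.1 * v p.2|
          ≤ Lg / 2 * |v p.1 * v p.2| := by
            apply mul_le_mul_of_nonneg_right h2 (abs_nonneg _)
        _ ≤ Lg / 2 * ((v p.1 * v p.1 + v p.2 * v p.2) / 2) := by
            apply mul_le_mul_of_nonneg_left h3 (by linarith)
    -- sum the bounds
    have hsum3 : |v ⬝ᵥ ((G * C₁) *ᵥ v)|
        ≤ ∑ p ∈ Finset.univ.filter P, Lg / 2 * ((v p.1 * v p.1 + v p.2 * v p.2) / 2) := by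
      rw [hsum2]
      calc |∑ p ∈ Finset.univ.filter P, (c * (g (x p.1) - g (x p.2)) * (v p.1 * v p.2))|
          ≤ ∑ p ∈ Finset.univ.filter P, |c * (g (x p.1) - g (x p.2)) * (v p.1 * v p.2)| :=
            Finset.abs_sum_le_sum_abs _ _
        _ ≤ _ := Finset.sum_le_sum hterm
    -- ∑ over filter P of v_i^2 ≤ total
    have hproj : ∀ (f : Fin N × Fin N → Fin N),
        (∀ p ∈ Finset.univ.filter P, ∀ q ∈ Finset.univ.filter P, f p = f q → p = q) →
        ∑ p ∈ Finset.univ.filter P, v (f p) * v (f p) ≤ v ⬝ᵥ v := by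
      intro f hinj
      rw [show (v ⬝ᵥ v) = ∑ i, v i * v i from rfl,
        ← Finset.sum_image (f := fun i => v i * v i) hinj]
      apply Finset.sum_le_sum_of_subset_of_nonneg (Finset.subset_univ _)
      intro i _ _; exact mul_self_nonneg _
    have hfst : ∑ p ∈ Finset.univ.filter P, v p.1 * v p.1 ≤ v ⬝ᵥ v := by
      apply hproj Prod.fst
      intro p hp q hq h
      simp only [Finset.mem_filter, hP] at hp hq
      have : (p.2 : ℕ) = (q.2 : ℕ) := by rw [hp.2, hq.2, h]
      exact Prod.ext h (Fin.ext this)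
    have hsnd : ∑ p ∈ Finset.univ.filter P, v p.2 * v p.2 ≤ v ⬝ᵥ v := by
      apply hproj Prod.snd
      intro p hp q hq h
      simp only [Finset.mem_filter, hP] at hp hq
      have : (p.1 : ℕ) = (q.1 : ℕ) := by omega
      exact Prod.ext (Fin.ext this) h
    calc |v ⬝ᵥ ((G * C₁) *ᵥ v)|
        ≤ ∑ p ∈ Finset.univ.filter P, Lg / 2 * ((v p.1 * v p.1 + v p.2 * v p.2) / 2) :=
          hsum3
      _ = Lg / 2 * ((∑ p ∈ Finset.univ.filter P, v p.1 * v p.1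
            + ∑ p ∈ Finset.univ.filter P, v p.2 * v p.2) / 2) := by
          rw [← Finset.mul_sum, ← Finset.sum_add_distrib, ← Finset.sum_div]
      _ ≤ Lg / 2 * (v ⬝ᵥ v) := by
          apply mul_le_mul_of_nonneg_left _ (by linarith)
          linarith
  -- now bound the logNorm
  have hbound : ∀ (B : Matrix (Fin N) (Fin N) ℝ),
      (∀ v : Fin N → ℝ, |v ⬝ᵥ (B *ᵥ v)| ≤ Lg / 2 * (v ⬝ᵥ v)) → logNorm B ≤ Lg / 2 := by
    intro B hB
    apply Real.sSup_le
    · rintro r ⟨v, hv, rfl⟩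
      have hvv : 0 < v ⬝ᵥ v := by
        have h0 : 0 ≤ v ⬝ᵥ v := Finset.sum_nonneg fun i _ => mul_self_nonneg _
        rcases lt_or_eq_of_le h0 with h | h
        · exact h
        · exfalso; apply hv
          exact (dotProduct_self_eq_zero).mp h.symm
      rw [div_le_iff₀ hvv]
      calc v ⬝ᵥ (B *ᵥ v) ≤ |v ⬝ᵥ (B *ᵥ v)| := le_abs_self _
        _ ≤ Lg / 2 * (v ⬝ᵥ v) := hB v
    · linarith
  constructor
  · exact hbound _ hkey
  · apply hbound
    intro v
    have : v ⬝ᵥ ((-(G * C₁)) *ᵥ v) = -(v ⬝ᵥ ((G * C₁) *ᵥ v)) := by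
      rw [Matrix.neg_mulVec, dotProduct_neg]
    rw [this, abs_neg]
    exact hkey v
end
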